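/- arXiv:2212.02638 — 4 statements merged into one kernel-verified Lean document; each statement's English description precedes it below -/
import Mathlib

section
/- Suppose $L(\cdot,y)$ is $m_x$-strongly convex for each $y$ with unique minimizer $x^*(y)$, and $\nabla_y L$ is $\ell_{yx}$-Lipschitz in $x$. Then for all $(x,y)$, $\|\nabla_y L(x,y) - \nabla\psi(y)\| \le (\ell_{yx}/m_x)\|\nabla_x L(x,y)\|$, where $\psi(y)=\min_x L(x,y)$ and $\nabla\psi(y)=\nabla_y L(x^*(y),y)$. -/
/-!
Strong convexity makes the gradient strongly monotone, so `m ‖x - x'‖ ≤ ‖∇f x - ∇f x'‖`.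
Applied to `L(·, y)` at `x` and at its minimiser `x*(y)`, where the gradient vanishes, this bounds
`‖x - x*(y)‖` by `‖∇ₓL(x, y)‖ / mₓ`; the Lipschitz bound on `∇ᵧL` in `x` then transfers this to
`‖∇ᵧL(x, y) - ∇ᵧL(x*(y), y)‖`.
-/

open Set

theorem ConvexOn.add_fderiv_sub_le {E : Type*} [NormedAddCommGroup E] [NormedSpace ℝ E]
    {s : Set E} {f : E → ℝ} {f' : E →L[ℝ] ℝ} {x y : E}
    (hf : ConvexOn ℝ s f) (hx : x ∈ s) (hy : y ∈ s) (hf' : HasFDerivAt f f' x) :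
    f x + f' (y - x) ≤ f y := by
  let l : ℝ →ᵃ[ℝ] E := AffineMap.lineMap x y
  have hderiv : HasDerivAt (f ∘ l) (f' (y - x)) 0 := by
    have hf'' : HasFDerivAt f f' (l 0) := by simpa [l] using hf'
    exact hf''.comp_hasDerivAt 0 AffineMap.hasDerivAt_lineMap
  have hslope := (hf.comp_affineMap l).le_slope_of_hasDerivAt
    (by simpa [l] using hx) (by simpa [l] using hy) zero_lt_one hderiv
  simpa [slope, l, le_sub_iff_add_le'] using hslope

section Gradient

variable {E : Type*} [NormedAddCommGroup E] [InnerProductSpace ℝ E] [CompleteSpace E]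
  {f : E → ℝ} {g g' x y : E}

theorem IsLocalMin.hasGradientAt_eq_zero (h : IsLocalMin f x) (hg : HasGradientAt f g x) :
    g = 0 := by
  simpa using h.hasFDerivAt_eq_zero hg.hasFDerivAt

variable {s : Set E} {m : ℝ}

theorem StrongConvexOn.add_inner_add_le (hf : StrongConvexOn s m f) (hx : x ∈ s) (hy : y ∈ s)
    (hg : HasGradientAt f g x) :
    f x + inner ℝ g (y - x) + m / 2 * ‖y - x‖ ^ 2 ≤ f y := by
  -- `f - (m/2)‖·‖²` is convex, with derivative `⟪g - m • x, ·⟫` at `x`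
  have hderiv := hg.hasFDerivAt.sub ((hasStrictFDerivAt_norm_sq x).hasFDerivAt.const_mul (m / 2))
  have key := (strongConvexOn_iff_convex.mp hf).add_fderiv_sub_le hx hy hderiv
  simp only [sub_apply, InnerProductSpace.toDual_apply_apply, smul_apply, coe_innerSL_apply,
    nsmul_eq_mul, Nat.cast_ofNat, smul_eq_mul] at key
  have hsq : ‖y - x‖ ^ 2 = ‖y‖ ^ 2 - ‖x‖ ^ 2 - 2 * inner ℝ x (y - x) := by
    rw [norm_sub_sq_real, inner_sub_right, real_inner_self_eq_norm_sq, real_inner_comm]; ring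
  rw [hsq]
  linarith

theorem StrongConvexOn.mul_sq_norm_sub_le_inner (hf : StrongConvexOn s m f) (hx : x ∈ s)
    (hy : y ∈ s) (hg : HasGradientAt f g x) (hg' : HasGradientAt f g' y) :
    m * ‖x - y‖ ^ 2 ≤ inner ℝ (g - g') (x - y) := by
  have hxy := hf.add_inner_add_le hx hy hg
  have hyx := hf.add_inner_add_le hy hx hg'
  rw [← neg_sub x y, inner_neg_right, norm_neg] at hxy
  rw [inner_sub_left]
  linarith

theorem StrongConvexOn.mul_norm_sub_le_norm_sub (hf : StrongConvexOn s m f) (hx : x ∈ s)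
    (hy : y ∈ s) (hg : HasGradientAt f g x) (hg' : HasGradientAt f g' y) :
    m * ‖x - y‖ ≤ ‖g - g'‖ := by
  rcases (norm_nonneg (x - y)).eq_or_lt with hxy | hxy
  · simp [← hxy]
  refine le_of_mul_le_mul_right ?_ hxy
  calc m * ‖x - y‖ * ‖x - y‖ = m * ‖x - y‖ ^ 2 := by ring
    _ ≤ inner ℝ (g - g') (x - y) := hf.mul_sq_norm_sub_le_inner hx hy hg hg'
    _ ≤ ‖g - g'‖ * ‖x - y‖ := real_inner_le_norm _ _

end Gradient

theorem dual_gradient_tracking_general {d p : ℕ}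
    (L : EuclideanSpace ℝ (Fin d) → EuclideanSpace ℝ (Fin p) → ℝ)
    (gx : EuclideanSpace ℝ (Fin d) → EuclideanSpace ℝ (Fin p) → EuclideanSpace ℝ (Fin d))
    (gy : EuclideanSpace ℝ (Fin d) → EuclideanSpace ℝ (Fin p) → EuclideanSpace ℝ (Fin p))
    (xstar : EuclideanSpace ℝ (Fin p) → EuclideanSpace ℝ (Fin d))
    (mx ℓyx : ℝ) (hmx : 0 < mx) (hℓyx : 0 ≤ ℓyx)
    (hconv : ∀ y, StrongConvexOn univ mx (fun x => L x y))
    (hgx : ∀ x y, HasGradientAt (fun x' => L x' y) (gx x y) x)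
    (hmin : ∀ y, IsMinOn (fun x => L x y) univ (xstar y))
    (hlipyx : ∀ x x' y, ‖gy x y - gy x' y‖ ≤ ℓyx * ‖x - x'‖) :
    ∀ x y, ‖gy x y - gy (xstar y) y‖ ≤ (ℓyx / mx) * ‖gx x y‖ := by
  intro x y
  have hcrit : gx (xstar y) y = 0 :=
    ((hmin y).isLocalMin Filter.univ_mem).hasGradientAt_eq_zero (hgx _ y)
  have hdist : mx * ‖x - xstar y‖ ≤ ‖gx x y‖ := by
    simpa [hcrit] using
      (hconv y).mul_norm_sub_le_norm_sub (mem_univ x) (mem_univ (xstar y)) (hgx x y) (hgx _ y)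
  calc ‖gy x y - gy (xstar y) y‖ ≤ ℓyx * ‖x - xstar y‖ := hlipyx _ _ _
    _ ≤ ℓyx * (‖gx x y‖ / mx) := by
        gcongr
        rwa [le_div_iff₀ hmx, mul_comm]
    _ = (ℓyx / mx) * ‖gx x y‖ := by ring

/-- `‖∇ᵧL(x,y) - ∇ψ(y)‖ ≤ (ℓyx/mx) ‖∇ₓL(x,y)‖`. -/
theorem dual_gradient_tracking {d p : ℕ}
    (L : EuclideanSpace ℝ (Fin d) → EuclideanSpace ℝ (Fin p) → ℝ)
    (gx : EuclideanSpace ℝ (Fin d) → EuclideanSpace ℝ (Fin p) → EuclideanSpace ℝ (Fin d))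
    (gy : EuclideanSpace ℝ (Fin d) → EuclideanSpace ℝ (Fin p) → EuclideanSpace ℝ (Fin p))
    (xstar : EuclideanSpace ℝ (Fin p) → EuclideanSpace ℝ (Fin d))
    (ψ : EuclideanSpace ℝ (Fin p) → ℝ)
    (mx ℓyx : ℝ) (hmx : 0 < mx) (hℓyx : 0 ≤ ℓyx)
    (hconv : ∀ y, StrongConvexOn univ mx (fun x => L x y))
    (hgx : ∀ x y, HasGradientAt (fun x' => L x' y) (gx x y) x)
    (hgy : ∀ x y, HasGradientAt (fun y' => L x y') (gy x y) y)
    (hmin : ∀ y, IsMinOn (fun x => L x y) univ (xstar y))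
    (huniq : ∀ y x, IsMinOn (fun x' => L x' y) univ x → x = xstar y)
    (hψ : ∀ y, ψ y = L (xstar y) y)
    (hψgrad : ∀ y, HasGradientAt ψ (gy (xstar y) y) y)
    (hlipyx : ∀ x x' y, ‖gy x y - gy x' y‖ ≤ ℓyx * ‖x - x'‖) :
    ∀ x y, ‖gy x y - gy (xstar y) y‖ ≤ (ℓyx / mx) * ‖gx x y‖ :=
  dual_gradient_tracking_general L gx gy xstar mx ℓyx hmx hℓyx hconv hgx hmin hlipyx
end

section
/- Suppose $L:\mathbb{R}^d\times\mathbb{R}^p\to\mathbb{R}$ satisfies the one-sided PL condition in $y$: $\|\nabla_y L(x,y)\|^2 \ge 2p_y[\max_{\tilde y} L(x,\tilde y)-L(x,y)]$ for all $(x,y)$, with $p_y>0$, and that $L(\cdot,y)$ has a unique minimizer $x^*(y)$ for each $y$, and $\psi(y)=L(x^*(y),y)$ has a global maximizer $y^*$. Then $\|\nabla\psi(y)\|^2 \ge 2p_y(\psi(y^*)-\psi(y))$ for all $y$, where $\nabla\psi(y)=\nabla_y L(x^*(y),y)$. -/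
open Set

/-- the one-sided PL condition in `y` transfers to the dual function
`ψ(y) = L(x*(y), y)`: `‖∇ψ(y)‖² ≥ 2 p_y (ψ(y*) - ψ(y))`. -/
theorem one_sided_PL_transfer {d p : ℕ}
    (L : EuclideanSpace ℝ (Fin d) → EuclideanSpace ℝ (Fin p) → ℝ)
    (gy : EuclideanSpace ℝ (Fin d) → EuclideanSpace ℝ (Fin p) → EuclideanSpace ℝ (Fin p))
    (xstar : EuclideanSpace ℝ (Fin p) → EuclideanSpace ℝ (Fin d))
    (ymax : EuclideanSpace ℝ (Fin d) → EuclideanSpace ℝ (Fin p))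
    (ψ : EuclideanSpace ℝ (Fin p) → ℝ)
    (py : ℝ) (hpy : 0 < py)
    (hgy : ∀ x y, HasGradientAt (fun y' => L x y') (gy x y) y)
    (hmin : ∀ y, IsMinOn (fun x => L x y) univ (xstar y))
    (huniq : ∀ y x, IsMinOn (fun x' => L x' y) univ x → x = xstar y)
    (hymax : ∀ x, IsMaxOn (fun y => L x y) univ (ymax x))
    (hPL : ∀ x y, 2 * py * (L x (ymax x) - L x y) ≤ ‖gy x y‖ ^ 2)
    (hψ : ∀ y, ψ y = L (xstar y) y)
    (hψgrad : ∀ y, HasGradientAt ψ (gy (xstar y) y) y)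
    (ystar : EuclideanSpace ℝ (Fin p))
    (hystar : IsMaxOn ψ univ ystar) :
    ∀ y, 2 * py * (ψ ystar - ψ y) ≤ ‖gy (xstar y) y‖ ^ 2 := by
  intro y
  have h1 : ψ ystar ≤ L (xstar y) ystar := by
    rw [hψ]
    exact hmin ystar (mem_univ (xstar y))
  have h2 : L (xstar y) ystar ≤ L (xstar y) (ymax (xstar y)) :=
    hymax (xstar y) (mem_univ ystar)
  have := hPL (xstar y) y
  rw [hψ y]
  nlinarith
end

section
/- Let $\psi:\mathbb{R}^p\to\mathbb{R}$ be differentiable with $\ell_\psi$-Lipschitz gradient, and let the ascent direction $t\in\mathbb{R}^p$ and point $y$ with update $y^+=y+\beta t$ where $\beta>0$. Suppose $\|t\|\le\Gamma_t\|v\|$ and $t^\top \nabla\psi(y) \ge c_1\|\nabla\psi(y)\|^2 - c_2\epsilon^2$ for constants $\Gamma_t,c_1,c_2>0$, where $\|v\|^2\le 2\|\nabla\psi(y)\|^2+2\epsilon^2$. Then $\psi(y^+) \ge \psi(y) + \beta(c_1-\beta\ell_\psi\Gamma_t^2)\|\nabla\psi(y)\|^2 - \beta(c_2+\beta\ell_\psi\Gamma_t^2)\epsilon^2$.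 -/
/-!
Along the ray `s ↦ y + s • h`, the Lipschitz bound on the gradient gives
`⟪∇ψ (y + s • h), h⟫ ≥ ⟪∇ψ y, h⟫ - s ℓ ‖h‖²`, so
`s ↦ ψ (y + s • h) - s ⟪∇ψ y, h⟫ + s² ℓ ‖h‖² / 2` is monotone on `s ≥ 0`; comparing `s = 0`
with `s = 1` is the descent lemma. Applied to `h = β t`, the inner-product hypothesis bounds the
linear term from below, and `‖t‖² ≤ Γ² ‖v‖² ≤ Γ² (2 ‖∇ψ y‖² + 2 ε²)` bounds the quadratic one.
-/

open scoped RealInnerProductSpace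

section DescentLemma

variable {E : Type*} [NormedAddCommGroup E] [InnerProductSpace ℝ E] {f : E → ℝ} {g : E → E}
  {ℓ : ℝ}

theorem hasDerivAt_comp_add_smul_of_hasGradientAt [CompleteSpace E]
    (hf : ∀ x, HasGradientAt f (g x) x) (y h : E) (s : ℝ) :
    HasDerivAt (fun s : ℝ => f (y + s • h)) ⟪g (y + s • h), h⟫ s := by
  have hline : HasDerivAt (fun s : ℝ => y + s • h) h s := by
    simpa using ((hasDerivAt_id s).smul_const h).const_add y
  simpa [Function.comp_def] using (hf (y + s • h)).hasFDerivAt.comp_hasDerivAt s hline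

theorem inner_sub_le_inner_add_smul_of_lipschitz (hlip : ∀ x z, ‖g x - g z‖ ≤ ℓ * ‖x - z‖)
    (y h : E) {s : ℝ} (hs : 0 ≤ s) : ⟪g y, h⟫ - s * (ℓ * ‖h‖ ^ 2) ≤ ⟪g (y + s • h), h⟫ := by
  have hbound : ⟪g y - g (y + s • h), h⟫ ≤ s * (ℓ * ‖h‖ ^ 2) :=
    calc ⟪g y - g (y + s • h), h⟫ ≤ ‖g y - g (y + s • h)‖ * ‖h‖ := real_inner_le_norm _ _
      _ ≤ ℓ * ‖y - (y + s • h)‖ * ‖h‖ := by gcongr; exact hlip _ _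
      _ = s * (ℓ * ‖h‖ ^ 2) := by
        rw [sub_add_cancel_left, norm_neg, norm_smul, Real.norm_of_nonneg hs]; ring
  rw [inner_sub_left] at hbound
  linarith

theorem le_apply_add_of_lipschitz_gradient [CompleteSpace E] (hf : ∀ x, HasGradientAt f (g x) x)
    (hlip : ∀ x z, ‖g x - g z‖ ≤ ℓ * ‖x - z‖) (y h : E) :
    f y + ⟪g y, h⟫ - ℓ / 2 * ‖h‖ ^ 2 ≤ f (y + h) := by
  set F : ℝ → ℝ := fun s => f (y + s • h) - s * ⟪g y, h⟫ + s ^ 2 * (ℓ * ‖h‖ ^ 2 / 2)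
  have hF : ∀ s, HasDerivAt F (⟪g (y + s • h), h⟫ - ⟪g y, h⟫ + s * (ℓ * ‖h‖ ^ 2)) s := by
    intro s
    refine (((hasDerivAt_comp_add_smul_of_hasGradientAt hf y h s).sub
      ((hasDerivAt_id s).mul_const ⟪g y, h⟫)).add
      ((hasDerivAt_pow 2 s).mul_const (ℓ * ‖h‖ ^ 2 / 2))).congr_deriv ?_
    norm_num
    ring
  have hmono : MonotoneOn F (Set.Ici 0) := by
    refine monotoneOn_of_hasDerivWithinAt_nonneg (convex_Ici 0)
      (fun s _ => (hF s).continuousAt.continuousWithinAt) (fun s _ => (hF s).hasDerivWithinAt)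
      fun s hs => ?_
    rw [interior_Ici] at hs
    linarith [inner_sub_le_inner_add_smul_of_lipschitz hlip y h hs.le]
  have h01 := hmono Set.self_mem_Ici (Set.mem_Ici.mpr zero_le_one) zero_le_one
  norm_num [F] at h01
  linarith

end DescentLemma

theorem ascent_step_estimate_general {p : ℕ}
    (ψ : EuclideanSpace ℝ (Fin p) → ℝ)
    (gψ : EuclideanSpace ℝ (Fin p) → EuclideanSpace ℝ (Fin p))
    (ℓψ Γt c1 c2 β ε : ℝ)
    (hℓψ : 0 ≤ ℓψ) (hβ : 0 < β)
    (hgrad : ∀ y, HasGradientAt ψ (gψ y) y)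
    (hlip : ∀ y z, ‖gψ y - gψ z‖ ≤ ℓψ * ‖y - z‖)
    (t v y : EuclideanSpace ℝ (Fin p))
    (ht : ‖t‖ ≤ Γt * ‖v‖)
    (hinner : c1 * ‖gψ y‖ ^ 2 - c2 * ε ^ 2 ≤ ⟪t, gψ y⟫)
    (hv : ‖v‖ ^ 2 ≤ 2 * ‖gψ y‖ ^ 2 + 2 * ε ^ 2) :
    ψ y + β * (c1 - β * ℓψ * Γt ^ 2) * ‖gψ y‖ ^ 2 -
      β * (c2 + β * ℓψ * Γt ^ 2) * ε ^ 2 ≤ ψ (y + β • t) := by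
  have ht_sq : ‖t‖ ^ 2 ≤ Γt ^ 2 * (2 * ‖gψ y‖ ^ 2 + 2 * ε ^ 2) :=
    calc ‖t‖ ^ 2 ≤ (Γt * ‖v‖) ^ 2 := pow_le_pow_left₀ (norm_nonneg t) ht 2
      _ ≤ Γt ^ 2 * (2 * ‖gψ y‖ ^ 2 + 2 * ε ^ 2) := by rw [mul_pow]; gcongr
  calc ψ y + β * (c1 - β * ℓψ * Γt ^ 2) * ‖gψ y‖ ^ 2 - β * (c2 + β * ℓψ * Γt ^ 2) * ε ^ 2
      = ψ y + β * (c1 * ‖gψ y‖ ^ 2 - c2 * ε ^ 2)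
          - ℓψ / 2 * β ^ 2 * (Γt ^ 2 * (2 * ‖gψ y‖ ^ 2 + 2 * ε ^ 2)) := by ring
    _ ≤ ψ y + β * ⟪t, gψ y⟫ - ℓψ / 2 * β ^ 2 * ‖t‖ ^ 2 := by
        gcongr ψ y + β * ?_ - _ * ?_
    _ = ψ y + ⟪gψ y, β • t⟫ - ℓψ / 2 * ‖β • t‖ ^ 2 := by
        rw [real_inner_smul_right, real_inner_comm, norm_smul, Real.norm_of_nonneg hβ.le]; ring
    _ ≤ ψ (y + β • t) := le_apply_add_of_lipschitz_gradient hgrad hlip y (β • t)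

/-- one-step ascent estimate for gradient-related ascent directions. -/
theorem ascent_step_estimate {p : ℕ}
    (ψ : EuclideanSpace ℝ (Fin p) → ℝ)
    (gψ : EuclideanSpace ℝ (Fin p) → EuclideanSpace ℝ (Fin p))
    (ℓψ Γt c1 c2 β ε : ℝ)
    (hℓψ : 0 ≤ ℓψ) (hΓt : 0 < Γt) (hc1 : 0 < c1) (hc2 : 0 < c2) (hβ : 0 < β)
    (hgrad : ∀ y, HasGradientAt ψ (gψ y) y)
    (hlip : ∀ y z, ‖gψ y - gψ z‖ ≤ ℓψ * ‖y - z‖)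
    (t v y : EuclideanSpace ℝ (Fin p))
    (ht : ‖t‖ ≤ Γt * ‖v‖)
    (hinner : c1 * ‖gψ y‖ ^ 2 - c2 * ε ^ 2 ≤ ⟪t, gψ y⟫)
    (hv : ‖v‖ ^ 2 ≤ 2 * ‖gψ y‖ ^ 2 + 2 * ε ^ 2) :
    ψ y + β * (c1 - β * ℓψ * Γt ^ 2) * ‖gψ y‖ ^ 2 -
      β * (c2 + β * ℓψ * Γt ^ 2) * ε ^ 2 ≤ ψ (y + β • t) :=
  ascent_step_estimate_general ψ gψ ℓψ Γt c1 c2 β ε hℓψ hβ hgrad hlip t v y ht hinner hv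
end

section
/- Let $(x^\dagger,y^\dagger)$ be a first-order stationary point of $L$ (i.e., $\nabla_x L(x^\dagger,y^\dagger)=0$, $\nabla_y L(x^\dagger,y^\dagger)=0$), with $\nabla_{xx}^2 L(x^\dagger,y^\dagger)$ invertible, and suppose the Schur-complement operator $N(x^\dagger,y^\dagger)=\nabla_{yx}^2 L\,[\nabla_{xx}^2 L]^{-1}\nabla_{xy}^2 L - \nabla_{yy}^2 L$ (evaluated at $(x^\dagger,y^\dagger)$) is invertible. Define the block matrices $X'_* = \begin{pmatrix}0 & -[\nabla_{xx}^2 L]^{-1}\nabla_{xy}^2 L\\ 0 & I\end{pmatrix}$ and $Y'_* = \begin{pmatrix}I & 0\\ N^{-1}\nabla_{yx}^2 L & I+N^{-1}\nabla_{yy}^2 L\end{pmatrix}$, all Hessian blocks at $(x^\dagger,y^\dagger)$. Then $X'_*$ is idempotent ($(X'_*)^2=X'_*$) and $X'_* Y'_* X'_* = 0$. -/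
/-- block-matrix algebra for the derivatives of the Newton-type maps `X` and
`Y` at a stationary point: `X'` is idempotent and `X' Y' X' = 0`. Here `A = ∇²ₓₓL`,
`B = ∇²ₓᵧL`, `Bt = ∇²ᵧₓL = Bᵀ`, `C = ∇²ᵧᵧL`, all at `(x†, y†)`, and
`N = Bt A⁻¹ B - C` is the Schur-complement operator. -/
theorem newton_maps_derivative_algebra {d p : ℕ}
    (A Ainv : Matrix (Fin d) (Fin d) ℝ)
    (B : Matrix (Fin d) (Fin p) ℝ) (Bt : Matrix (Fin p) (Fin d) ℝ)
    (C Nm Ninv : Matrix (Fin p) (Fin p) ℝ)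
    (hBt : Bt = B.transpose)
    (hA1 : A * Ainv = 1) (hA2 : Ainv * A = 1)
    (hN : Nm = Bt * Ainv * B - C)
    (hN1 : Nm * Ninv = 1) (hN2 : Ninv * Nm = 1) :
    let X' : Matrix (Fin d ⊕ Fin p) (Fin d ⊕ Fin p) ℝ :=
      Matrix.fromBlocks 0 (-(Ainv * B)) 0 1
    let Y' : Matrix (Fin d ⊕ Fin p) (Fin d ⊕ Fin p) ℝ :=
      Matrix.fromBlocks 1 0 (Ninv * Bt) (1 + Ninv * C)
    X' * X' = X' ∧ X' * Y' * X' = 0 := by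
  intro X' Y'
  have hkey : Ninv * (Bt * Ainv * B) - Ninv * C = 1 := by
    rw [← mul_sub, ← hN, hN2]
  constructor
  · simp [X', Matrix.fromBlocks_multiply]
  · simp only [X', Y', Matrix.fromBlocks_multiply, Matrix.mul_zero, Matrix.zero_mul,
      Matrix.mul_one, Matrix.one_mul, zero_add, add_zero, Matrix.neg_mul, Matrix.mul_neg,
      neg_neg]
    have hkey' : Ninv * (Bt * (Ainv * B)) = 1 + Ninv * C := by
      rw [sub_eq_iff_eq_add] at hkey
      simpa [Matrix.mul_assoc] using hkey
    have h2 : -(Ninv * Bt * (Ainv * B)) + (1 + Ninv * C) = 0 := by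
      rw [Matrix.mul_assoc, hkey']; abel
    have h1 : Ainv * B * (Ninv * Bt) * (Ainv * B) + -(Ainv * B * (1 + Ninv * C)) = 0 := by
      simp only [Matrix.mul_assoc, hkey']
      simp
    rw [h1, h2]
    simp
end
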